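/- arXiv:1805.04744 — 3 statements merged into one kernel-verified Lean document; each statement's English description precedes it below -/
import Mathlib

section
/- Let β > 1. For every n ≥ 1, the number of admissible words of length n satisfies β^n ≤ #Σ_β^n ≤ β^{n+1}/(β-1), where Σ_β^n is the set of words (ε_1,…,ε_n) that occur as the first n digits of the β-expansion of some x ∈ [0,1). -/
/-!
If the first `n` digits of `x` are `ε₁, …, εₙ`, then `T_β^n x = β^n (x - ∑ εᵢ β^{-i})`, so the
cylinder of an admissible word is contained in an interval of length `β^{-n}`, and it contains the
whole segment from its left end point `∑ εᵢ β^{-i}` to any of its points. The cylinders partition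
`[0,1)`, so their lengths sum to `1`: this gives `β^n ≤ #Σ_β^n` at once. The next digit of a point of
the cylinder of length `ℓ` lies in `[0, β^{n+1} ℓ]`, so each word has at most `β^{n+1} ℓ + 1`
admissible extensions, whence `#Σ_β^{n+1} ≤ #Σ_β^n + β^{n+1}` and `#Σ_β^n ≤ ∑_{k ≤ n} β^k`.
-/

open Filter MeasureTheory Set

noncomputable def betaT (β : ℝ) (x : ℝ) : ℝ := β * x - ⌊β * x⌋

noncomputable def eps (β x : ℝ) (n : ℕ) : ℤ := ⌊β * (betaT β)^[n - 1] x⌋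

noncomputable def runLen (β x : ℝ) (n : ℕ) : ℕ :=
  sSup {j | ∃ i, i + j ≤ n ∧ ∀ k < j, eps β x (i + k + 1) = 0}

def isAdmissible (β : ℝ) (n : ℕ) (ω : ℕ → ℤ) : Prop :=
  ∃ x ∈ Set.Ico (0 : ℝ) 1, ∀ k < n, eps β x (k + 1) = ω k

def cylinder (β : ℝ) (n : ℕ) (ω : ℕ → ℤ) : Set ℝ :=
  {x | x ∈ Set.Ico (0 : ℝ) 1 ∧ ∀ k < n, eps β x (k + 1) = ω k}

def isFull (β : ℝ) (n : ℕ) (ω : ℕ → ℤ) : Prop :=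
  MeasureTheory.volume (cylinder β n ω) = ENNReal.ofReal (β ^ (-(n : ℤ)))

open Classical in
noncomputable def epsStar (β : ℝ) : ℕ → ℤ :=
  if h : ∃ m, 1 ≤ m ∧ eps β 1 m ≠ 0 ∧ ∀ k, m < k → eps β 1 k = 0 then
    fun n =>
      if (n - 1) % Nat.find h + 1 = Nat.find h then eps β 1 (Nat.find h) - 1
      else eps β 1 ((n - 1) % Nat.find h + 1)
  else eps β 1

def lexLt (u v : ℕ → ℤ) : Prop := ∃ j, (∀ k < j, u k = v k) ∧ u j < v j

def lexLe (u v : ℕ → ℤ) : Prop := lexLt u v ∨ u = v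

noncomputable def vbeta (β x : ℝ) : ℝ :=
  sSup {v | 0 ≤ v ∧ ∃ᶠ n : ℕ in atTop, (betaT β)^[n] x ≤ β ^ (-((n : ℝ) * v))}

noncomputable def hatv (β x : ℝ) : ℝ :=
  sSup {v | 0 ≤ v ∧ ∀ᶠ N : ℕ in atTop, ∃ n, 1 ≤ n ∧ n ≤ N ∧ (betaT β)^[n] x ≤ β ^ (-(v * (N : ℝ)))}

noncomputable def betaSum (β x : ℝ) (n : ℕ) : ℝ :=
  ∑ i ∈ Finset.range n, (eps β x (i + 1) : ℝ) / β ^ (i + 1)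

noncomputable def digitWord (β : ℝ) (n : ℕ) (x : ℝ) : Fin n → ℤ :=
  fun k => eps β x (k + 1)

def admissibleWords (β : ℝ) (n : ℕ) : Set (Fin n → ℤ) :=
  {ω | ∃ x ∈ Ico (0 : ℝ) 1, ∀ k : Fin n, eps β x (k + 1) = ω k}

def digitCylinder (β : ℝ) (n : ℕ) (σ : Fin n → ℤ) : Set ℝ :=
  Ico 0 1 ∩ digitWord β n ⁻¹' {σ}

section

variable {β x : ℝ}

theorem eps_succ (β x : ℝ) (k : ℕ) : eps β x (k + 1) = ⌊β * (betaT β)^[k] x⌋ := rfl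

theorem iterate_betaT_mem_Ico (hx : x ∈ Ico (0 : ℝ) 1) (k : ℕ) :
    (betaT β)^[k] x ∈ Ico (0 : ℝ) 1 := by
  induction k with
  | zero => exact hx
  | succ k _ =>
    rw [Function.iterate_succ_apply']
    exact ⟨Int.fract_nonneg _, Int.fract_lt_one _⟩

theorem eps_mem_Icc (hβ : 0 ≤ β) (hx : x ∈ Ico (0 : ℝ) 1) (k : ℕ) :
    eps β x (k + 1) ∈ Icc 0 ⌊β⌋ := by
  obtain ⟨h0, h1⟩ := iterate_betaT_mem_Ico (β := β) hx k
  rw [eps_succ]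
  exact ⟨Int.floor_nonneg.2 (mul_nonneg hβ h0), Int.floor_le_floor (by nlinarith)⟩

theorem betaSum_succ (β x : ℝ) (k : ℕ) :
    betaSum β x (k + 1) = betaSum β x k + eps β x (k + 1) / β ^ (k + 1) :=
  Finset.sum_range_succ _ _

theorem betaSum_congr {y : ℝ} {n : ℕ} (h : ∀ i < n, eps β x (i + 1) = eps β y (i + 1)) :
    betaSum β x n = betaSum β y n :=
  Finset.sum_congr rfl fun i hi => by rw [h i (Finset.mem_range.1 hi)]

theorem iterate_betaT_eq (hβ : β ≠ 0) (x : ℝ) (k : ℕ) :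
    (betaT β)^[k] x = β ^ k * (x - betaSum β x k) := by
  induction k with
  | zero => simp [betaSum]
  | succ k ih =>
    rw [Function.iterate_succ_apply', betaT, ← eps_succ, ih, betaSum_succ]
    field_simp
    ring

theorem betaSum_mono (hβ : 0 < β) (hx : x ∈ Ico (0 : ℝ) 1) : Monotone (betaSum β x) :=
  monotone_nat_of_le_succ fun k => by
    have hε : (0 : ℝ) ≤ eps β x (k + 1) := by exact_mod_cast (eps_mem_Icc hβ.le hx k).1
    rw [betaSum_succ]
    exact le_add_of_nonneg_right (by positivity)

theorem betaSum_le_self (hβ : 0 < β) (hx : x ∈ Ico (0 : ℝ) 1) (n : ℕ) : betaSum β x n ≤ x := by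
  have h := (iterate_betaT_mem_Ico (β := β) hx n).1
  rw [iterate_betaT_eq hβ.ne'] at h
  nlinarith [pow_pos hβ n]

theorem eps_eq_of_mem_Icc_betaSum (hβ : 0 < β) (hx : x ∈ Ico (0 : ℝ) 1) {n : ℕ} {y : ℝ}
    (hy : y ∈ Icc (betaSum β x n) x) : ∀ k < n, eps β y (k + 1) = eps β x (k + 1) := by
  intro k hk
  induction k using Nat.strong_induction_on with
  | _ k ih =>
  have hsum : betaSum β y k = betaSum β x k :=
    betaSum_congr fun i hi => ih i hi (hi.trans hk)
  have hTy : β * (betaT β)^[k] y = β ^ (k + 1) * (y - betaSum β x k) := by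
    rw [iterate_betaT_eq hβ.ne', hsum]; ring
  have hTx : β * (betaT β)^[k] x = β ^ (k + 1) * (x - betaSum β x k) := by
    rw [iterate_betaT_eq hβ.ne']; ring
  have hp : 0 < β ^ (k + 1) := pow_pos hβ _
  rw [eps_succ, hTy, Int.floor_eq_iff]
  constructor
  · have h := (betaSum_mono hβ hx hk).trans hy.1
    rw [betaSum_succ, ← le_sub_iff_add_le', div_le_iff₀ hp] at h
    linarith
  · calc β ^ (k + 1) * (y - betaSum β x k) ≤ β ^ (k + 1) * (x - betaSum β x k) := by
          gcongr; exact hy.2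
      _ < eps β x (k + 1) + 1 := by rw [← hTx, eps_succ]; exact Int.lt_floor_add_one _

theorem Icc_betaSum_subset_digitCylinder (hβ : 0 < β) (hx : x ∈ Ico (0 : ℝ) 1) (n : ℕ) :
    Icc (betaSum β x n) x ⊆ digitCylinder β n (digitWord β n x) := by
  intro y hy
  have h0 : 0 ≤ betaSum β x n := by
    simpa [betaSum] using betaSum_mono hβ hx (Nat.zero_le n)
  exact ⟨⟨h0.trans hy.1, hy.2.trans_lt hx.2⟩,
    funext fun k => eps_eq_of_mem_Icc_betaSum hβ hx hy k k.2⟩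

theorem digitCylinder_subset_Ico (hβ : 0 < β) {n : ℕ} {σ : Fin n → ℤ}
    (hx : x ∈ digitCylinder β n σ) :
    digitCylinder β n σ ⊆ Ico (betaSum β x n) (betaSum β x n + (β ^ n)⁻¹) := by
  rintro y ⟨hy, hyσ⟩
  have hS : betaSum β y n = betaSum β x n :=
    betaSum_congr fun i hi => congrFun (hyσ.trans hx.2.symm) ⟨i, hi⟩
  obtain ⟨h0, h1⟩ := iterate_betaT_mem_Ico (β := β) hy n
  rw [iterate_betaT_eq hβ.ne', hS] at h0 h1
  have hp : 0 < β ^ n := pow_pos hβ n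
  refine ⟨by nlinarith, ?_⟩
  rw [← one_div, ← sub_lt_iff_lt_add', lt_div_iff₀' hp]
  exact h1

theorem measure_digitCylinder_ne_top (β : ℝ) (n : ℕ) (σ : Fin n → ℤ) :
    volume (digitCylinder β n σ) ≠ ⊤ :=
  ((measure_mono inter_subset_left).trans_lt measure_Ico_lt_top).ne

theorem measureReal_digitCylinder_le (hβ : 0 < β) {n : ℕ} (σ : Fin n → ℤ) :
    volume.real (digitCylinder β n σ) ≤ (β ^ n)⁻¹ := by
  rcases (digitCylinder β n σ).eq_empty_or_nonempty with h | ⟨x, hx⟩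
  · rw [h, measureReal_empty]; positivity
  · calc volume.real (digitCylinder β n σ)
        ≤ volume.real (Ico (betaSum β x n) (betaSum β x n + (β ^ n)⁻¹)) :=
          measureReal_mono (digitCylinder_subset_Ico hβ hx) measure_Ico_lt_top.ne
      _ = (β ^ n)⁻¹ := by rw [Real.volume_real_Ico]; simp [le_of_lt, hβ]

theorem eps_le_pow_mul_measureReal_digitCylinder (hβ : 0 < β) (hx : x ∈ Ico (0 : ℝ) 1)
    (n : ℕ) :
    (eps β x (n + 1) : ℝ) ≤ β ^ (n + 1) * volume.real (digitCylinder β n (digitWord β n x)) :=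
  calc (eps β x (n + 1) : ℝ) ≤ β * (betaT β)^[n] x := Int.floor_le _
    _ = β ^ (n + 1) * volume.real (Icc (betaSum β x n) x) := by
      rw [iterate_betaT_eq hβ.ne', Real.volume_real_Icc_of_le (betaSum_le_self hβ hx n)]; ring
    _ ≤ _ := mul_le_mul_of_nonneg_left (measureReal_mono
        (Icc_betaSum_subset_digitCylinder hβ hx n) (measure_digitCylinder_ne_top β n _))
        (by positivity)

theorem measurable_digitWord (β : ℝ) (n : ℕ) : Measurable (digitWord β n) := by
  have hT : Measurable (betaT β) := measurable_fract.comp (measurable_const_mul β)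
  exact measurable_pi_lambda _ fun k =>
    Int.measurable_floor.comp ((measurable_const_mul β).comp (hT.iterate _))

theorem admissibleWords_finite (hβ : 0 ≤ β) (n : ℕ) : (admissibleWords β n).Finite := by
  refine (Set.Finite.pi fun _ => finite_Icc 0 ⌊β⌋).subset ?_
  rintro σ ⟨x, hx, hσ⟩ k -
  rw [← hσ k]
  exact eps_mem_Icc hβ hx k

theorem sum_measureReal_digitCylinder (hβ : 0 ≤ β) (n : ℕ) :
    ∑ σ ∈ (admissibleWords_finite hβ n).toFinset, volume.real (digitCylinder β n σ) = 1 := by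
  have hunion : ⋃ σ ∈ (admissibleWords_finite hβ n).toFinset, digitCylinder β n σ
      = Ico (0 : ℝ) 1 := by
    refine Subset.antisymm (iUnion₂_subset fun σ _ => inter_subset_left) fun x hx => ?_
    exact mem_biUnion ((Finite.mem_toFinset _).2 ⟨x, hx, fun _ => rfl⟩) ⟨hx, rfl⟩
  have hdisj : PairwiseDisjoint ↑(admissibleWords_finite hβ n).toFinset (digitCylinder β n) :=
    fun σ _ τ _ hne => disjoint_left.2 fun x hσ hτ => hne (hσ.2.symm.trans hτ.2)
  rw [← measureReal_biUnion_finset hdisj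
    (fun σ _ => measurableSet_Ico.inter (measurable_digitWord β n (measurableSet_singleton σ)))
    (fun σ _ => measure_digitCylinder_ne_top β n σ), hunion, Real.volume_real_Ico]
  norm_num

theorem pow_le_ncard_admissibleWords (hβ : 0 < β) (n : ℕ) :
    β ^ n ≤ (admissibleWords β n).ncard := by
  have hfin := admissibleWords_finite hβ.le n
  have h : 1 ≤ ((admissibleWords β n).ncard : ℝ) / β ^ n :=
    calc 1 = ∑ σ ∈ hfin.toFinset, volume.real (digitCylinder β n σ) :=
          (sum_measureReal_digitCylinder hβ.le n).symm
      _ ≤ ∑ σ ∈ hfin.toFinset, (β ^ n)⁻¹ :=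
          Finset.sum_le_sum fun σ _ => measureReal_digitCylinder_le hβ σ
      _ = _ := by rw [Finset.sum_const, nsmul_eq_mul, ncard_eq_toFinset_card _ hfin, div_eq_mul_inv]
  rwa [le_div_iff₀ (pow_pos hβ n), one_mul] at h

theorem card_filter_init_eq_le (hβ : 0 < β) (n : ℕ) (σ : Fin n → ℤ) :
    (({τ ∈ (admissibleWords_finite hβ.le (n + 1)).toFinset | Fin.init τ = σ}.card : ℕ) : ℝ) ≤
      β ^ (n + 1) * volume.real (digitCylinder β n σ) + 1 := by
  set c := β ^ (n + 1) * volume.real (digitCylinder β n σ)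
  set F := {τ ∈ (admissibleWords_finite hβ.le (n + 1)).toFinset | Fin.init τ = σ}
  have hc : 0 ≤ c := by positivity
  have hmaps : ∀ τ ∈ F, τ (Fin.last n) ∈ Finset.Icc 0 ⌊c⌋ := by
    intro τ hτ
    obtain ⟨hτ', hτσ⟩ := Finset.mem_filter.1 hτ
    obtain ⟨x, hx, hxτ⟩ := (Finite.mem_toFinset _).1 hτ'
    have hinit : Fin.init τ = digitWord β n x := funext fun k => (hxτ k.castSucc).symm
    have hle := eps_le_pow_mul_measureReal_digitCylinder hβ hx n
    rw [← hinit, hτσ] at hle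
    rw [← hxτ (Fin.last n)]
    exact Finset.mem_Icc.2 ⟨(eps_mem_Icc hβ.le hx n).1, Int.le_floor.2 hle⟩
  have hinj : InjOn (fun τ : Fin (n + 1) → ℤ => τ (Fin.last n)) F := by
    intro τ hτ τ' hτ' h
    rw [← Fin.snoc_init_self τ, ← Fin.snoc_init_self τ', (Finset.mem_filter.1 hτ).2,
      (Finset.mem_filter.1 hτ').2]
    exact congrArg _ h
  have hIcc : ((Finset.Icc 0 ⌊c⌋).card : ℤ) = ⌊c⌋ + 1 := by
    rw [Int.card_Icc, sub_zero, Int.toNat_of_nonneg (by positivity)]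
  calc _ ≤ ((Finset.Icc 0 ⌊c⌋).card : ℝ) := by
        exact_mod_cast Finset.card_le_card_of_injOn _ hmaps hinj
    _ = ⌊c⌋ + 1 := by exact_mod_cast hIcc
    _ ≤ c + 1 := by gcongr; exact Int.floor_le c

theorem ncard_admissibleWords_succ_le (hβ : 0 < β) (n : ℕ) :
    ((admissibleWords β (n + 1)).ncard : ℝ) ≤ (admissibleWords β n).ncard + β ^ (n + 1) := by
  have h0 := admissibleWords_finite hβ.le n
  have h1 := admissibleWords_finite hβ.le (n + 1)
  have hmaps : MapsTo Fin.init (h1.toFinset : Set (Fin (n + 1) → ℤ)) h0.toFinset := by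
    intro τ hτ
    obtain ⟨x, hx, hxτ⟩ := (Finite.mem_toFinset _).1 hτ
    exact (Finite.mem_toFinset _).2 ⟨x, hx, fun k => hxτ k.castSucc⟩
  rw [ncard_eq_toFinset_card _ h1, ncard_eq_toFinset_card _ h0,
    Finset.card_eq_sum_card_fiberwise hmaps]
  push_cast
  calc _ ≤ ∑ σ ∈ h0.toFinset, (β ^ (n + 1) * volume.real (digitCylinder β n σ) + 1) :=
        Finset.sum_le_sum fun σ _ => card_filter_init_eq_le hβ n σ
    _ = _ := by
      rw [Finset.sum_add_distrib, ← Finset.mul_sum, sum_measureReal_digitCylinder hβ.le,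
        Finset.sum_const, nsmul_one]
      ring

theorem ncard_admissibleWords_le_geom_sum (hβ : 0 < β) (n : ℕ) :
    ((admissibleWords β n).ncard : ℝ) ≤ ∑ k ∈ Finset.range (n + 1), β ^ k := by
  induction n with
  | zero => simpa using ncard_le_one_of_subsingleton (admissibleWords β 0)
  | succ n ih =>
    rw [Finset.sum_range_succ]
    linarith [ncard_admissibleWords_succ_le hβ n]

end

theorem stmt3_general (β : ℝ) (hβ : 1 < β) (n : ℕ) :
    β ^ n ≤ ({ω : Fin n → ℤ | ∃ x ∈ Set.Ico (0 : ℝ) 1,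
        ∀ k : Fin n, eps β x (k + 1) = ω k}.ncard : ℝ) ∧
    ({ω : Fin n → ℤ | ∃ x ∈ Set.Ico (0 : ℝ) 1,
        ∀ k : Fin n, eps β x (k + 1) = ω k}.ncard : ℝ) ≤ β ^ (n + 1) / (β - 1) := by
  have hβ0 : 0 < β := zero_lt_one.trans hβ
  refine ⟨pow_le_ncard_admissibleWords hβ0 n,
    (ncard_admissibleWords_le_geom_sum hβ0 n).trans ?_⟩
  rw [le_div_iff₀ (sub_pos.2 hβ), geom_sum_mul]
  linarith [pow_pos hβ0 (n + 1)]

theorem stmt3 (β : ℝ) (hβ : 1 < β) (n : ℕ) (hn : 1 ≤ n) :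
    β ^ n ≤ ({ω : Fin n → ℤ | ∃ x ∈ Set.Ico (0 : ℝ) 1,
        ∀ k : Fin n, eps β x (k + 1) = ω k}.ncard : ℝ) ∧
    ({ω : Fin n → ℤ | ∃ x ∈ Set.Ico (0 : ℝ) 1,
        ∀ k : Fin n, eps β x (k + 1) = ω k}.ncard : ℝ) ≤ β ^ (n + 1) / (β - 1) :=
  stmt3_general β hβ n
end

section
/- Let β > 1. A word (ω_1,…,ω_n) with digits in {0,1,…,⌈β⌉} is admissible (i.e., is the digit prefix of the β-expansion of some x ∈ [0,1)) if and only if for every 0 ≤ j < n, the shifted word (ω_{j+1},…,ω_n) is lexicographically ≤ (ε*_1(β),…,ε*_{n-j}(β)), where ε*(β) is the infinite β-expansion of 1. -/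
open Filter MeasureTheory Set

/-! The greedy expansion gives `x = ∑_{k<m} ε_{k+1}(x) β^{-(k+1)} + T^m x / β^m`, and the partial
values of ε*(β) lie in `[1 - β^{-i}, 1)`: for ε(1,β) because `0 < T^i 1 ≤ 1`, and in the simple
Parry case because the period block has value exactly `1 - β^{-p}`. Hence a digit of `y ∈ [0,1)`
exceeding ε* after a common prefix would force `y ≥ 1`; applied to `y = T^j x` this gives
necessity. Conversely, the lexicographic conditions give, by induction on the length, that every
suffix of ω has value in `[0,1)`, and a word all of whose suffix values lie in `[0,1)` is the digit
prefix of its own value. -/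

noncomputable def digitValue (β : ℝ) (m : ℕ) (w : ℕ → ℤ) : ℝ :=
  ∑ k ∈ Finset.range m, (w k : ℝ) / β ^ (k + 1)

section DigitValue

variable {β : ℝ} {m : ℕ} {u v w : ℕ → ℤ}

lemma digitValue_congr (h : ∀ k < m, u k = v k) : digitValue β m u = digitValue β m v :=
  Finset.sum_congr rfl fun k hk => by rw [h k (Finset.mem_range.mp hk)]

lemma digitValue_nonneg (hβ : 0 < β) (h : ∀ k < m, 0 ≤ w k) : 0 ≤ digitValue β m w :=
  Finset.sum_nonneg fun k hk => by
    have : (0 : ℝ) ≤ w k := by exact_mod_cast h k (Finset.mem_range.mp hk)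
    positivity

lemma digitValue_succ (β : ℝ) (m : ℕ) (w : ℕ → ℤ) :
    digitValue β (m + 1) w = (w 0 + digitValue β m fun k => w (k + 1)) / β := by
  simp only [digitValue, Finset.sum_range_succ', add_div, Finset.sum_div, pow_succ, div_div,
    pow_zero, one_mul]
  ring

lemma digitValue_succ_last (β : ℝ) (m : ℕ) (w : ℕ → ℤ) :
    digitValue β (m + 1) w = digitValue β m w + w m / β ^ (m + 1) :=
  Finset.sum_range_succ _ _

lemma digitValue_add (β : ℝ) (a b : ℕ) (w : ℕ → ℤ) :
    digitValue β (a + b) w = digitValue β a w + digitValue β b (fun k => w (a + k)) / β ^ a := by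
  simp only [digitValue, Finset.sum_range_add, Finset.sum_div, div_div, ← pow_add]
  congr! 3 with k
  ring

lemma digitValue_succ_of_prefix_eq {i : ℕ} (h : ∀ k < i, u k = v k) :
    digitValue β (i + 1) u = digitValue β (i + 1) v + ((u i : ℝ) - v i) / β ^ (i + 1) := by
  rw [digitValue_succ_last, digitValue_succ_last, digitValue_congr h]
  ring

end DigitValue

section BetaTransformation

variable {β x : ℝ}

lemma betaT_mem_Ico (β x : ℝ) : betaT β x ∈ Ico (0 : ℝ) 1 :=
  ⟨Int.fract_nonneg (β * x), Int.fract_lt_one (β * x)⟩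

lemma betaT_iterate_succ_mem_Ico (β x : ℝ) (m : ℕ) : (betaT β)^[m + 1] x ∈ Ico (0 : ℝ) 1 := by
  rw [Function.iterate_succ_apply']
  exact betaT_mem_Ico β _

lemma betaT_iterate_mem_Ico (hx : x ∈ Ico (0 : ℝ) 1) : ∀ m, (betaT β)^[m] x ∈ Ico (0 : ℝ) 1
  | 0 => hx
  | m + 1 => betaT_iterate_succ_mem_Ico β x m

lemma betaT_iterate_one_mem_Icc (β : ℝ) : ∀ m, (betaT β)^[m] 1 ∈ Icc (0 : ℝ) 1
  | 0 => by simp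
  | m + 1 => Ico_subset_Icc_self (betaT_iterate_succ_mem_Ico β 1 m)

lemma eps_succ_eq_floor (β x : ℝ) (m : ℕ) : eps β x (m + 1) = ⌊β * (betaT β)^[m] x⌋ := by
  simp [eps]

lemma eps_iterate (β x : ℝ) (j k : ℕ) : eps β ((betaT β)^[j] x) (k + 1) = eps β x (j + k + 1) := by
  rw [eps_succ_eq_floor, eps_succ_eq_floor, ← Function.iterate_add_apply, add_comm k]

lemma eps_betaT (β x : ℝ) (k : ℕ) : eps β (betaT β x) (k + 1) = eps β x (k + 2) :=
  eps_iterate β x 1 k |>.trans (by rw [add_comm 1 k])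

lemma eps_eq_zero_of_iterate_eq_zero {i k : ℕ} (hi : (betaT β)^[i] x = 0) (hk : i < k) :
    eps β x k = 0 := by
  obtain ⟨k, rfl⟩ := Nat.exists_eq_add_of_lt hk
  have : (betaT β)^[i + k] x = 0 := by
    rw [add_comm, Function.iterate_add_apply, hi, Function.iterate_fixed (by simp [betaT])]
  rw [eps_succ_eq_floor, this, mul_zero, Int.floor_zero]

lemma digitValue_eps_add_iterate (hβ : β ≠ 0) (m : ℕ) :
    digitValue β m (fun k => eps β x (k + 1)) + (betaT β)^[m] x / β ^ m = x := by
  induction m with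
  | zero => simp [digitValue]
  | succ m ih =>
    rw [digitValue_succ_last, Function.iterate_succ_apply', betaT, eps_succ_eq_floor]
    conv_rhs => rw [← ih]
    field_simp
    ring

lemma digitValue_eps_le (hβ : 0 < β) (hx : 0 ≤ x) (m : ℕ) :
    digitValue β m (fun k => eps β x (k + 1)) ≤ x := by
  have : 0 ≤ (betaT β)^[m] x / β ^ m := by
    have : 0 ≤ (betaT β)^[m] x := by
      cases m with
      | zero => exact hx
      | succ m => exact (betaT_iterate_succ_mem_Ico β x m).1
    positivity
  linarith [digitValue_eps_add_iterate (x := x) hβ.ne' m]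

lemma eq_zero_of_eps_eq_zero (hβ : 1 < β) (hx : x ∈ Ico (0 : ℝ) 1)
    (h : ∀ k, eps β x (k + 1) = 0) : x = 0 := by
  refine (hx.1.eq_or_lt.resolve_right fun hpos => ?_).symm
  obtain ⟨m, hm⟩ := exists_pow_lt_of_lt_one hpos (inv_lt_one_of_one_lt₀ hβ)
  have hβm : 0 < β ^ m := by positivity
  have hval := digitValue_eps_add_iterate (x := x) (by positivity) m
  rw [digitValue_congr (v := 0) fun k _ => h k] at hval
  have : (betaT β)^[m] x / β ^ m < 1 / β ^ m := by
    gcongr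
    exact (betaT_iterate_mem_Ico hx m).2
  simp only [digitValue, Pi.zero_apply, Int.cast_zero, zero_div, Finset.sum_const_zero, zero_add]
    at hval
  rw [inv_pow, ← one_div] at hm
  linarith

lemma digitValue_eps_one_mem (hβ : 0 < β) {i : ℕ} (hpos : 0 < (betaT β)^[i] 1) :
    digitValue β i (fun k => eps β 1 (k + 1)) ∈ Ico (1 - 1 / β ^ i) 1 := by
  have hval := digitValue_eps_add_iterate (x := 1) hβ.ne' i
  have hβi : 0 < β ^ i := by positivity
  constructor
  · have : (betaT β)^[i] 1 / β ^ i ≤ 1 / β ^ i := by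
      gcongr
      exact (betaT_iterate_one_mem_Icc β i).2
    linarith
  · have : 0 < (betaT β)^[i] 1 / β ^ i := by positivity
    linarith

end BetaTransformation

section Parry

variable {β : ℝ}

lemma exists_last_eps_one_ne_zero (hβ : 1 < β) {i : ℕ} (hi : (betaT β)^[i] 1 = 0) :
    ∃ m, 1 ≤ m ∧ eps β 1 m ≠ 0 ∧ ∀ k, m < k → eps β 1 k = 0 := by
  have h1 : eps β 1 1 ≠ 0 := by
    rw [eps_succ_eq_floor, Function.iterate_zero_apply, mul_one]
    exact (Int.floor_pos.mpr hβ.le).ne'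
  have hi1 : 1 ≤ i := Nat.one_le_iff_ne_zero.mpr fun h => by simp [h] at hi
  refine ⟨Nat.findGreatest (fun m => eps β 1 m ≠ 0) i, Nat.le_findGreatest hi1 h1,
    Nat.findGreatest_spec (P := fun m => eps β 1 m ≠ 0) hi1 h1, fun k hk => ?_⟩
  rcases le_or_gt k i with hki | hik
  · exact not_not.mp (Nat.findGreatest_is_greatest hk hki)
  · exact eps_eq_zero_of_iterate_eq_zero hi hik

lemma digitValue_mem_of_periodic (hβ : 0 < β) {p : ℕ} (hp : 0 < p) {v : ℕ → ℤ}
    (hper : ∀ k, v (p + k) = v k) (hvp : digitValue β p v = 1 - 1 / β ^ p)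
    (hinit : ∀ i < p, digitValue β i v ∈ Ico (1 - 1 / β ^ i) 1) (i : ℕ) :
    digitValue β i v ∈ Ico (1 - 1 / β ^ i) 1 := by
  induction i using Nat.strong_induction_on with
  | _ i ih =>
  rcases lt_or_ge i p with hi | hi
  · exact hinit i hi
  obtain ⟨i, rfl⟩ := Nat.exists_eq_add_of_le hi
  obtain ⟨hlow, hup⟩ := ih i (by omega)
  rw [digitValue_add, hvp, digitValue_congr fun k _ => hper k]
  have hβp : 0 < β ^ p := by positivity
  constructor
  · calc 1 - 1 / β ^ (p + i) = 1 - 1 / β ^ p + (1 - 1 / β ^ i) / β ^ p := by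
          rw [pow_add]; field_simp; ring
      _ ≤ _ := by gcongr
  · calc _ < 1 - 1 / β ^ p + 1 / β ^ p := by gcongr
      _ = 1 := by ring

-- `epsStar β (k + 1)` when `p` is the position of the last nonzero digit of ε(1,β)
lemma digitValue_parry_mem (hβ : 1 < β) {p : ℕ} (hp : 1 ≤ p) (hpne : eps β 1 p ≠ 0)
    (hzero : ∀ k, p < k → eps β 1 k = 0) (i : ℕ) :
    digitValue β i (fun k => if k % p + 1 = p then eps β 1 p - 1 else eps β 1 (k % p + 1)) ∈
      Ico (1 - 1 / β ^ i) 1 := by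
  have hβ0 : 0 < β := by linarith
  set v : ℕ → ℤ := fun k => if k % p + 1 = p then eps β 1 p - 1 else eps β 1 (k % p + 1)
    with hv
  have hinit : ∀ k < p - 1, v k = eps β 1 (k + 1) := fun k hk => by
    simp only [hv, Nat.mod_eq_of_lt (by omega : k < p), if_neg (by omega : k + 1 ≠ p)]
  have hlast : v (p - 1) = eps β 1 p - 1 := by
    simp only [hv, Nat.mod_eq_of_lt (by omega : p - 1 < p), Nat.sub_add_cancel hp, if_true]
  obtain ⟨q, rfl⟩ : ∃ q, p = q + 1 := ⟨p - 1, by omega⟩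
  simp only [Nat.add_sub_cancel] at hinit hlast
  have hTp : (betaT β)^[q + 1] 1 = 0 :=
    eq_zero_of_eps_eq_zero hβ (betaT_iterate_succ_mem_Ico β 1 q) fun k => by
      rw [eps_iterate]; exact hzero _ (by omega)
  have hvp : digitValue β (q + 1) v = 1 - 1 / β ^ (q + 1) := by
    have hone := digitValue_eps_add_iterate (x := 1) hβ0.ne' (q + 1)
    rw [hTp, zero_div, add_zero] at hone
    rw [digitValue_succ_of_prefix_eq (v := fun k => eps β 1 (k + 1)) hinit, hone, hlast]
    push_cast
    ring
  refine digitValue_mem_of_periodic hβ0 q.succ_pos (fun k => ?_) hvp (fun i hi => ?_) i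
  · simp only [hv, Nat.add_mod_left]
  · rw [digitValue_congr fun k hk => hinit k (by omega)]
    exact digitValue_eps_one_mem hβ0 <| (betaT_iterate_one_mem_Icc β i).1.lt_of_ne
      fun h => hpne (eps_eq_zero_of_iterate_eq_zero h.symm hi)

theorem digitValue_epsStar_mem (hβ : 1 < β) (i : ℕ) :
    digitValue β i (fun k => epsStar β (k + 1)) ∈ Ico (1 - 1 / β ^ i) 1 := by
  classical
  by_cases h : ∃ m, 1 ≤ m ∧ eps β 1 m ≠ 0 ∧ ∀ k, m < k → eps β 1 k = 0
  · obtain ⟨hp, hpne, hzero⟩ := Nat.find_spec h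
    rw [epsStar, dif_pos h]
    simpa only [Nat.add_sub_cancel] using digitValue_parry_mem hβ hp hpne hzero i
  · rw [epsStar, dif_neg h]
    exact digitValue_eps_one_mem (by linarith) <| (betaT_iterate_one_mem_Icc β i).1.lt_of_ne
      fun h0 => h (exists_last_eps_one_ne_zero hβ h0.symm)

end Parry

section Lexicographic

def truncWord (m : ℕ) (w : ℕ → ℤ) : ℕ → ℤ := fun k => if k < m then w k else 0

def SuffixesLexLe (m : ℕ) (w v : ℕ → ℤ) : Prop :=
  ∀ j < m, lexLe (truncWord (m - j) fun k => w (j + k)) (truncWord (m - j) v)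

variable {m : ℕ} {u v w : ℕ → ℤ}

lemma lexLe_truncWord_of_forall_le (h : ∀ i < m, (∀ k < i, u k = v k) → u i ≤ v i) :
    lexLe (truncWord m u) (truncWord m v) := by
  classical
  by_cases hall : ∀ k < m, u k = v k
  · exact Or.inr <| funext fun k => by
      by_cases hk : k < m <;> simp [truncWord, hk, hall]
  · push Not at hall
    obtain ⟨him, hine⟩ := Nat.find_spec hall
    have hpre : ∀ k < Nat.find hall, u k = v k := fun k hk =>
      not_not.mp fun hne => Nat.find_min hall hk ⟨by omega, hne⟩
    refine Or.inl ⟨Nat.find hall, fun k hk => ?_, ?_⟩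
    · simp [truncWord, hpre k hk]
    · simpa [truncWord, him] using lt_of_le_of_ne (h _ him hpre) hine

lemma eq_or_exists_lt_of_lexLe_truncWord (h : lexLe (truncWord m u) (truncWord m v)) :
    (∀ k < m, u k = v k) ∨ ∃ i < m, (∀ k < i, u k = v k) ∧ u i < v i := by
  rcases h with ⟨i, hpre, hi⟩ | heq
  · have him : i < m := by
      by_contra him
      simp [truncWord, him] at hi
    refine Or.inr ⟨i, him, fun k hk => ?_, by simpa [truncWord, him] using hi⟩
    simpa [truncWord, hk.trans him] using hpre k hk
  · exact Or.inl fun k hk => by simpa [truncWord, hk] using congrFun heq k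

lemma SuffixesLexLe.drop (h : SuffixesLexLe m w v) (i : ℕ) :
    SuffixesLexLe (m - i) (fun k => w (i + k)) v := fun j hj => by
  simpa only [Nat.sub_sub, add_assoc] using h (i + j) (by omega)

end Lexicographic

section Admissibility

variable {β : ℝ} {v : ℕ → ℤ}

lemma eps_le_of_prefix_eq (hβ : 0 < β) (hv : ∀ i, 1 - 1 / β ^ i ≤ digitValue β i v) {y : ℝ}
    (hy : y ∈ Ico (0 : ℝ) 1) {i : ℕ} (hpre : ∀ k < i, eps β y (k + 1) = v k) :
    eps β y (i + 1) ≤ v i := by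
  by_contra! hgt
  have hgt' : (v i : ℝ) + 1 ≤ eps β y (i + 1) := by exact_mod_cast hgt
  have hval := digitValue_eps_le hβ hy.1 (i + 1)
  rw [digitValue_succ_of_prefix_eq hpre] at hval
  have : 1 / β ^ (i + 1) ≤ ((eps β y (i + 1) : ℝ) - v i) / β ^ (i + 1) := by
    gcongr
    linarith
  linarith [hv (i + 1), hy.2]

lemma digitValue_lt_one_of_suffixesLexLe (hβ : 0 < β) (hv : ∀ i, digitValue β i v < 1) :
    ∀ {m : ℕ} {w : ℕ → ℤ}, (∀ k < m, 0 ≤ w k) → SuffixesLexLe m w v → digitValue β m w < 1 := by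
  intro m
  induction m using Nat.strong_induction_on with
  | _ m ih =>
  intro w h0 h
  rcases Nat.eq_zero_or_pos m with rfl | hm
  · simp [digitValue]
  rcases eq_or_exists_lt_of_lexLe_truncWord (by simpa only [Nat.sub_zero, zero_add] using h 0 hm)
    with heq | ⟨i, him, hpre, hi⟩
  · rw [digitValue_congr heq]
    exact hv m
  have htail := ih (m - (i + 1)) (by omega) (fun k hk => h0 _ (by omega)) (h.drop (i + 1))
  have hhead : ((w i : ℝ) - v i) / β ^ (i + 1) ≤ -1 / β ^ (i + 1) := by
    have : (w i : ℝ) + 1 ≤ v i := by exact_mod_cast hi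
    gcongr
    linarith
  have htail' : digitValue β (m - (i + 1)) (fun k => w (i + 1 + k)) / β ^ (i + 1)
      < 1 / β ^ (i + 1) := by
    gcongr
  calc digitValue β m w
      = digitValue β (i + 1) v + ((w i : ℝ) - v i) / β ^ (i + 1)
        + digitValue β (m - (i + 1)) (fun k => w (i + 1 + k)) / β ^ (i + 1) := by
        rw [← digitValue_succ_of_prefix_eq hpre, ← digitValue_add, Nat.add_sub_cancel' (by omega)]
    _ < digitValue β (i + 1) v + -1 / β ^ (i + 1) + 1 / β ^ (i + 1) := by linarith
    _ = digitValue β (i + 1) v := by ring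
    _ < 1 := hv (i + 1)

lemma eps_digitValue (hβ : β ≠ 0) : ∀ {m : ℕ} {w : ℕ → ℤ},
    (∀ j ≤ m, digitValue β (m - j) (fun k => w (j + k)) ∈ Ico (0 : ℝ) 1) →
    ∀ k < m, eps β (digitValue β m w) (k + 1) = w k := by
  intro m
  induction m with
  | zero => intro w _ k hk; omega
  | succ m ih =>
  intro w h k hk
  have htail : digitValue β m (fun k => w (k + 1)) ∈ Ico (0 : ℝ) 1 := by
    simpa [add_comm 1] using h 1 (by omega)
  have hmul : β * digitValue β (m + 1) w = w 0 + digitValue β m (fun k => w (k + 1)) := by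
    rw [digitValue_succ]
    field_simp
  have hfloor : ⌊β * digitValue β (m + 1) w⌋ = w 0 := by
    rw [hmul, Int.floor_intCast_add, Int.floor_eq_zero_iff.mpr htail, add_zero]
  cases k with
  | zero => simpa [eps_succ_eq_floor] using hfloor
  | succ k =>
    have hT : betaT β (digitValue β (m + 1) w) = digitValue β m (fun k => w (k + 1)) := by
      rw [betaT, hfloor, hmul, add_sub_cancel_left]
    rw [← eps_betaT, hT]
    refine ih (fun j hj => ?_) k (by omega)
    simpa [add_right_comm _ 1] using h (j + 1) (by omega)

end Admissibility

theorem stmt9_general (β : ℝ) (hβ : 1 < β) (n : ℕ) (ω : ℕ → ℤ)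
    (hrange : ∀ k < n, 0 ≤ ω k ∧ ω k ≤ ⌈β⌉) :
    isAdmissible β n ω ↔
      ∀ j < n, lexLe (fun k => if j + k < n then ω (j + k) else 0)
        (fun k => if k < n - j then epsStar β (k + 1) else 0) := by
  have hβ0 : 0 < β := by linarith
  have hstar := digitValue_epsStar_mem hβ
  simp only [← Nat.lt_sub_iff_add_lt']
  change isAdmissible β n ω ↔ SuffixesLexLe n ω fun k => epsStar β (k + 1)
  constructor
  · rintro ⟨x, hx, hdig⟩ j hj
    refine lexLe_truncWord_of_forall_le fun i hi hpre => ?_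
    have hshift : ∀ k < n - j, eps β ((betaT β)^[j] x) (k + 1) = ω (j + k) := fun k hk => by
      rw [eps_iterate, hdig _ (by omega)]
    rw [← hshift i hi]
    exact eps_le_of_prefix_eq hβ0 (fun i => (hstar i).1) (betaT_iterate_mem_Ico hx j)
      fun k hk => (hshift k (by omega)).trans (hpre k hk)
  · intro h
    have htails : ∀ j ≤ n, digitValue β (n - j) (fun k => ω (j + k)) ∈ Ico (0 : ℝ) 1 :=
      fun j _ => ⟨digitValue_nonneg hβ0 fun k hk => (hrange _ (by omega)).1,
        digitValue_lt_one_of_suffixesLexLe hβ0 (fun i => (hstar i).2)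
          (fun k hk => (hrange _ (by omega)).1) (h.drop j)⟩
    exact ⟨digitValue β n ω, by simpa using htails 0 n.zero_le, eps_digitValue hβ0.ne' htails⟩

theorem stmt9 (β : ℝ) (hβ : 1 < β) (n : ℕ) (hn : 1 ≤ n) (ω : ℕ → ℤ)
    (hrange : ∀ k < n, 0 ≤ ω k ∧ ω k ≤ ⌈β⌉) :
    isAdmissible β n ω ↔
      ∀ j < n, lexLe (fun k => if j + k < n then ω (j + k) else 0)
        (fun k => if k < n - j then epsStar β (k + 1) else 0) :=
  stmt9_general β hβ n ω hrange
end

section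
/- Let β > 1. If (ω_1,…,ω_{n-1},ω'_n) is admissible with ω'_n > 0, then for every 0 ≤ ω_n < ω'_n the cylinder I_n(ω_1,…,ω_{n-1},ω_n) is full, i.e., has length exactly β^{-n}. -/
open Filter MeasureTheory Set

/-!
Write `Sⱼ = ∑_{i<j} ωᵢ β^{-(i+1)}`. Since `Tʲ x = βʲ (x - Sⱼ)` as long as the first `j` digits of
`x` are `ω₀, …, ω_{j-1}`, a point has these first `n` digits exactly when it lies in
`[Sⱼ, Sⱼ + β^{-j})` for every `j ≤ n`. With nonnegative digits the left endpoints increase, so the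
cylinder is the whole interval `[Sₙ, Sₙ + β^{-n})` once `Sₙ + β^{-n}` lies below all earlier right
endpoints. Lowering the last digit of an admissible word from `c'` to `c ≤ c' - 1` moves `Sₙ` down
by at least `β^{-n}`, below a point `x₀` of the admissible cylinder, and `x₀` lies below the earlier
right endpoints, which both words share.
-/

namespace BetaExpansion

variable {β x : ℝ} {ω : ℕ → ℤ} {n : ℕ}

noncomputable def digitSum (β : ℝ) (ω : ℕ → ℤ) (k : ℕ) : ℝ :=
  ∑ j ∈ Finset.range k, (ω j : ℝ) / β ^ (j + 1)

@[simp]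
lemma digitSum_zero : digitSum β ω 0 = 0 := by simp [digitSum]

lemma digitSum_succ (k : ℕ) :
    digitSum β ω (k + 1) = digitSum β ω k + ω k / β ^ (k + 1) :=
  Finset.sum_range_succ _ _

lemma digitSum_congr {ω' : ℕ → ℤ} {k : ℕ} (h : ∀ i < k, ω i = ω' i) :
    digitSum β ω k = digitSum β ω' k :=
  Finset.sum_congr rfl fun i hi => by rw [h i (Finset.mem_range.1 hi)]

lemma digitSum_mono (hβ : 0 < β) (hω : ∀ i < n, 0 ≤ ω i) {j : ℕ} (hj : j ≤ n) :
    digitSum β ω j ≤ digitSum β ω n :=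
  Finset.sum_le_sum_of_subset_of_nonneg (Finset.range_subset_range.2 hj) fun i hi _ => by
    have := hω i (Finset.mem_range.1 hi)
    positivity

lemma mem_Ico_add_inv_iff {a b : ℝ} (hb : 0 < b) :
    x ∈ Ico a (a + b⁻¹) ↔ b * (x - a) ∈ Ico (0 : ℝ) 1 := by
  rw [mem_Ico, mem_Ico, mul_nonneg_iff_of_pos_left hb, sub_nonneg, ← lt_div_iff₀' hb, one_div,
    sub_lt_iff_lt_add']

lemma betaT_mem_Ico (β x : ℝ) : betaT β x ∈ Ico (0 : ℝ) 1 :=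
  ⟨sub_nonneg.2 (Int.floor_le _), sub_lt_iff_lt_add'.2 (Int.lt_floor_add_one _)⟩

lemma iterate_betaT_mem_Ico (hx : x ∈ Ico (0 : ℝ) 1) : ∀ k, (betaT β)^[k] x ∈ Ico (0 : ℝ) 1
  | 0 => hx
  | k + 1 => by rw [Function.iterate_succ_apply']; exact betaT_mem_Ico β _

lemma eps_succ (β x : ℝ) (k : ℕ) : eps β x (k + 1) = ⌊β * (betaT β)^[k] x⌋ := rfl

lemma eps_succ_nonneg (hβ : 0 ≤ β) (hx : x ∈ Ico (0 : ℝ) 1) (k : ℕ) : 0 ≤ eps β x (k + 1) :=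
  Int.floor_nonneg.2 (mul_nonneg hβ (iterate_betaT_mem_Ico hx k).1)

lemma mem_cylinder_succ_iff :
    x ∈ cylinder β (n + 1) ω ↔ x ∈ cylinder β n ω ∧ eps β x (n + 1) = ω n := by
  simp only [_root_.cylinder, mem_ofPred_eq, Nat.forall_lt_succ_right, and_assoc]

lemma nonneg_of_mem_cylinder (hβ : 0 ≤ β) (hx : x ∈ cylinder β n ω) : ∀ k < n, 0 ≤ ω k :=
  fun k hk => hx.2 k hk ▸ eps_succ_nonneg hβ hx.1 k

lemma iterate_betaT_eq_of_mem_cylinder (hβ : β ≠ 0) :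
    ∀ {n}, x ∈ cylinder β n ω → (betaT β)^[n] x = β ^ n * (x - digitSum β ω n)
  | 0, _ => by simp
  | n + 1, hx => by
    obtain ⟨hxn, hdigit⟩ := mem_cylinder_succ_iff.1 hx
    rw [Function.iterate_succ_apply', betaT, ← eps_succ, hdigit,
      iterate_betaT_eq_of_mem_cylinder hβ hxn, digitSum_succ]
    field_simp
    ring

lemma eps_succ_eq_iff (hβ : 0 < β) (hx : x ∈ cylinder β n ω) :
    eps β x (n + 1) = ω n ↔
      x ∈ Ico (digitSum β ω (n + 1)) (digitSum β ω (n + 1) + (β ^ (n + 1))⁻¹) := by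
  have hshift : β * (β ^ n * (x - digitSum β ω n)) =
      ω n + β ^ (n + 1) * (x - digitSum β ω (n + 1)) := by
    rw [digitSum_succ]
    field_simp
    ring
  rw [eps_succ, iterate_betaT_eq_of_mem_cylinder hβ.ne' hx, hshift, Int.floor_eq_iff,
    mem_Ico_add_inv_iff (by positivity), mem_Ico]
  constructor <;> rintro ⟨h₁, h₂⟩ <;> constructor <;> linarith

lemma mem_cylinder_iff (hβ : 0 < β) :
    x ∈ cylinder β n ω ↔ ∀ j ≤ n, x ∈ Ico (digitSum β ω j) (digitSum β ω j + (β ^ j)⁻¹) := by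
  induction n with
  | zero => simp [_root_.cylinder]
  | succ n ih =>
    constructor
    · intro hx j hj
      obtain ⟨hxn, hdigit⟩ := mem_cylinder_succ_iff.1 hx
      rcases Nat.le_succ_iff.1 hj with hj | rfl
      · exact ih.1 hxn j hj
      · exact (eps_succ_eq_iff hβ hxn).1 hdigit
    · intro h
      have hxn := ih.2 fun j hj => h j (Nat.le_succ_of_le hj)
      exact mem_cylinder_succ_iff.2 ⟨hxn, (eps_succ_eq_iff hβ hxn).2 (h _ le_rfl)⟩

lemma cylinder_eq_Ico (hβ : 0 < β) (hlo : ∀ j ≤ n, digitSum β ω j ≤ digitSum β ω n)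
    (hhi : ∀ j < n, digitSum β ω n + (β ^ n)⁻¹ ≤ digitSum β ω j + (β ^ j)⁻¹) :
    cylinder β n ω = Ico (digitSum β ω n) (digitSum β ω n + (β ^ n)⁻¹) := by
  ext x
  rw [mem_cylinder_iff hβ]
  refine ⟨fun h => h n le_rfl, fun ⟨h₁, h₂⟩ j hj => ⟨(hlo j hj).trans h₁, ?_⟩⟩
  rcases hj.lt_or_eq with hj | rfl
  · exact h₂.trans_le (hhi j hj)
  · exact h₂

lemma isFull_of_digitSum (hβ : 0 < β) (hlo : ∀ j ≤ n, digitSum β ω j ≤ digitSum β ω n)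
    (hhi : ∀ j < n, digitSum β ω n + (β ^ n)⁻¹ ≤ digitSum β ω j + (β ^ j)⁻¹) :
    isFull β n ω := by
  rw [isFull, cylinder_eq_Ico hβ hlo hhi, Real.volume_Ico, add_sub_cancel_left, zpow_neg,
    zpow_natCast]

end BetaExpansion

open BetaExpansion

theorem stmt13_general (β : ℝ) (hβ : 1 < β) (n : ℕ) (hn : 1 ≤ n) (ω : ℕ → ℤ) (c' : ℤ)
    (hadm : isAdmissible β n (fun k => if k = n - 1 then c' else ω k)) :
    ∀ c : ℤ, 0 ≤ c → c < c' →
      isFull β n (fun k => if k = n - 1 then c else ω k) := by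
  intro c hc hcc'
  obtain ⟨m, rfl⟩ : ∃ m, n = m + 1 := ⟨n - 1, by omega⟩
  simp only [Nat.add_sub_cancel] at hadm ⊢
  set ω' : ℕ → ℤ := fun k => if k = m then c' else ω k
  set ωc : ℕ → ℤ := fun k => if k = m then c else ω k
  obtain ⟨x₀, hx₀⟩ : (cylinder β (m + 1) ω').Nonempty := hadm
  have hβ0 : 0 < β := zero_lt_one.trans hβ
  have hagree : ∀ i ≠ m, ωc i = ω' i := fun i hi => by simp [ωc, ω', hi]
  have hnonneg : ∀ i < m + 1, 0 ≤ ωc i := fun i hi => by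
    by_cases him : i = m
    · simpa [ωc, him] using hc
    · exact hagree i him ▸ nonneg_of_mem_cylinder hβ0.le hx₀ i hi
  have hgap : digitSum β ωc (m + 1) + (β ^ (m + 1))⁻¹ ≤ digitSum β ω' (m + 1) := by
    rw [digitSum_succ, digitSum_succ, digitSum_congr fun i hi => hagree i hi.ne]
    have hc1 : (c + 1 : ℝ) ≤ c' := by exact_mod_cast hcc'
    have := div_le_div_of_nonneg_right hc1 (pow_pos hβ0 (m + 1)).le
    simp only [ωc, ω', if_pos rfl]
    rw [add_div, one_div] at this
    linarith
  refine isFull_of_digitSum hβ0 (fun j hj => digitSum_mono hβ0 hnonneg hj) fun j hj => ?_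
  have hx₀mem := (mem_cylinder_iff hβ0).1 hx₀
  calc digitSum β ωc (m + 1) + (β ^ (m + 1))⁻¹ ≤ digitSum β ω' (m + 1) := hgap
    _ ≤ x₀ := (hx₀mem (m + 1) le_rfl).1
    _ ≤ digitSum β ω' j + (β ^ j)⁻¹ := (hx₀mem j hj.le).2.le
    _ = digitSum β ωc j + (β ^ j)⁻¹ := by
      rw [digitSum_congr fun i hi => hagree i (by omega)]

theorem stmt13 (β : ℝ) (hβ : 1 < β) (n : ℕ) (hn : 1 ≤ n) (ω : ℕ → ℤ) (c' : ℤ)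
    (hadm : isAdmissible β n (fun k => if k = n - 1 then c' else ω k)) (hc' : 0 < c') :
    ∀ c : ℤ, 0 ≤ c → c < c' →
      isFull β n (fun k => if k = n - 1 then c else ω k) :=
  stmt13_general β hβ n hn ω c' hadm
end
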